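/- Let p be a prime and let K = K_0 ⊂ K_1 ⊂ ⋯ ⊂ K_n be a sufficiently ramified tower of local fields of characteristic (0,p). Then for every x ∈ K_n one has v(tr_{K_n/K}(x)) ≥ n − 1/(p−1) + v(x); equivalently, |tr_{K_n/K}(x)| ≤ |p|^{n − (p−1)^{−1}} |x| for any absolute value inducing v. -/
import Mathlib


/-- Data exhibiting `L` as a local field of characteristic `(0, p)`: a multiplicative
nonarchimedean absolute value `a` (representing the absolute valuation `v` via
`a x = c ^ v x` for a base `0 < c < 1`), a uniformizer `ϖ` generating the (discrete)
value group, residue characteristic `p` (`a p < 1`), completeness, and perfectness of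
the residue field (surjectivity of the `p`-power map on residues). -/
structure LocalFieldData (p : ℕ) (L : Type*) [Field L] where
  a : L → ℝ
  a_zero : a 0 = 0
  a_pos : ∀ x : L, x ≠ 0 → 0 < a x
  a_mul : ∀ x y : L, a (x * y) = a x * a y
  a_add : ∀ x y : L, a (x + y) ≤ max (a x) (a y)
  ϖ : L
  ϖ_pos : 0 < a ϖ
  ϖ_lt_one : a ϖ < 1
  disc : ∀ x : L, x ≠ 0 → ∃ k : ℤ, a x = a ϖ ^ k
  res_char : a (p : L) < 1
  complete : ∀ u : ℕ → L,
    (∀ ε : ℝ, 0 < ε → ∃ N : ℕ, ∀ m ≥ N, ∀ n ≥ N, a (u m - u n) < ε) →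
    ∃ l : L, ∀ ε : ℝ, 0 < ε → ∃ N : ℕ, ∀ n ≥ N, a (u n - l) < ε
  perfect_res : ∀ x : L, a x ≤ 1 → ∃ y : L, a y ≤ 1 ∧ a (x - y ^ p) < 1


namespace LocalFieldData
variable {p : ℕ} {L : Type*} [Field L] (D : LocalFieldData p L)

lemma a_nonneg (x : L) : 0 ≤ D.a x := by
  rcases eq_or_ne x 0 with rfl | h
  · simp [D.a_zero]
  · exact (D.a_pos x h).le

lemma a_one : D.a 1 = 1 := by
  have h := D.a_mul 1 1
  rw [one_mul] at h
  have h1 : 0 < D.a 1 := D.a_pos 1 one_ne_zero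
  nlinarith

lemma a_pow (x : L) (m : ℕ) : D.a (x ^ m) = D.a x ^ m := by
  induction m with
  | zero => simpa using D.a_one
  | succ k ih => rw [pow_succ, pow_succ, D.a_mul, ih]

lemma a_inv (x : L) (hx : x ≠ 0) : D.a x⁻¹ = (D.a x)⁻¹ := by
  have h := D.a_mul x x⁻¹
  rw [mul_inv_cancel₀ hx, D.a_one] at h
  exact eq_inv_of_mul_eq_one_right h.symm

lemma a_zpow (x : L) (hx : x ≠ 0) (k : ℤ) : D.a (x ^ k) = D.a x ^ k := by
  cases k with
  | ofNat m => simpa using D.a_pow x m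
  | negSucc m =>
      rw [zpow_negSucc, D.a_inv _ (pow_ne_zero _ hx), D.a_pow, zpow_negSucc]

end LocalFieldData

lemma top_trace {L : Type*} [Field L] (T : Subfield L) (hT : T = ⊤) (x : L) :
    ((Algebra.trace ↥T L x : ↥T) : L) = x := by
  have hmem : ∀ z : L, z ∈ T := fun z => hT ▸ Subfield.mem_top z
  have hsurj : Function.Surjective (Algebra.linearMap ↥T L) := fun z => ⟨⟨z, hmem z⟩, rfl⟩
  haveI : Module.Finite ↥T L := Module.Finite.of_surjective _ hsurj
  have hfr : Module.finrank ↥T L = 1 := by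
    rw [← (LinearEquiv.ofBijective (Algebra.linearMap ↥T L)
      ⟨(algebraMap ↥T L).injective, hsurj⟩).finrank_eq, Module.finrank_self]
  have hx : Algebra.trace ↥T L x = Module.finrank ↥T L • (⟨x, hmem x⟩ : ↥T) := by
    conv_lhs => rw [show x = algebraMap ↥T L ⟨x, hmem x⟩ from rfl]
    rw [Algebra.trace_algebraMap]
  rw [hx, hfr, one_smul]

lemma step_bound {p : ℕ} (hp : p.Prime) {L : Type*} [Field L] (D : LocalFieldData p L)
    {G H : Subfield L} (hGH : G ≤ H) {πG πH : L}
    (hπGG : πG ∈ G) (hπGH : πG ∈ H)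
    (hπHpos : 0 < D.a πH) (hπH1 : D.a πH < 1)
    (htot : D.a πG = D.a πH ^ p)
    (hdiscH : ∀ x ∈ H, x ≠ 0 → ∃ k : ℤ, D.a x = D.a πH ^ k)
    (dd : ℕ)
    (hchar : ∀ x : ↥H, ((∀ y : ↥H, D.a (y : L) ≤ 1 →
        D.a (((@Algebra.trace ↥G ↥H _ _ ((Subfield.inclusion hGH).toAlgebra)) (x * y) : ↥G) : L)
          ≤ 1) ↔
        D.a (x : L) ≤ D.a πH ^ (-(dd : ℤ))))
    (y : ↥H) :
    D.a (((@Algebra.trace ↥G ↥H _ _ ((Subfield.inclusion hGH).toAlgebra)) y : ↥G) : L) ≤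
      D.a πH ^ ((dd : ℤ) - ((p : ℤ) - 1)) * D.a (y : L) := by
  letI : Algebra ↥G ↥H := (Subfield.inclusion hGH).toAlgebra
  have hc0 : D.a πH ≠ 0 := ne_of_gt hπHpos
  rcases eq_or_ne y 0 with rfl | hy
  · simp [map_zero, D.a_zero]
  · have hyL : (y : L) ≠ 0 := fun h => hy (by exact_mod_cast ZeroMemClass.coe_eq_zero.mp h)
    obtain ⟨k, hk⟩ := hdiscH (y : L) y.2 hyL
    have hπG0 : πG ≠ 0 := by
      intro h
      rw [h, D.a_zero] at htot
      exact absurd htot.symm (ne_of_gt (pow_pos hπHpos p))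
    have hπGpos : 0 < D.a πG := D.a_pos _ hπG0
    set t : ℤ := (k + (dd : ℤ)) / (p : ℤ) with ht
    have hmod := Int.emod_nonneg (k + (dd : ℤ)) (b := (p : ℤ)) (by exact_mod_cast hp.ne_zero)
    have hmod2 := Int.emod_lt_of_pos (k + (dd : ℤ)) (by exact_mod_cast hp.pos : (0:ℤ) < p)
    have hdm := Int.mul_ediv_add_emod (k + (dd : ℤ)) (p : ℤ)
    have hpt1 : k + (dd : ℤ) - ((p : ℤ) - 1) ≤ (p : ℤ) * t := by rw [ht]; linarith
    have hpt2 : -(dd : ℤ) ≤ k - (p : ℤ) * t := by rw [ht]; linarith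
    -- the element z = y * πG ^ (-t)
    set w : ↥H := ⟨πG, hπGH⟩ with hw
    set wG : ↥G := ⟨πG, hπGG⟩ with hwG
    have hwcoe : ((w ^ (-t) : ↥H) : L) = πG ^ (-t) := by
      rw [← Subfield.coe_subtype, map_zpow₀]
      rfl
    have haπG : ∀ s : ℤ, D.a (πG ^ s) = D.a πH ^ ((p : ℤ) * s) := by
      intro s
      rw [D.a_zpow _ hπG0, htot, ← zpow_natCast (D.a πH) p, ← zpow_mul]
    have hz : D.a ((y * w ^ (-t) : ↥H) : L) ≤ D.a πH ^ (-(dd : ℤ)) := by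
      push_cast [hwcoe]
      rw [D.a_mul, hk, haπG]
      rw [← zpow_add₀ hc0]
      apply zpow_le_zpow_right_of_le_one₀ hπHpos hπH1.le
      rw [mul_neg]
      linarith
    have hT1 := (hchar _).mpr hz 1 (by rw [OneMemClass.coe_one, D.a_one])
    rw [mul_one] at hT1
    -- rewrite trace (y * w ^ (-t)) = wG ^ (-t) * trace y
    have halg : (w : ↥H) = algebraMap ↥G ↥H wG := rfl
    have htr : (Algebra.trace ↥G ↥H) (y * w ^ (-t)) = wG ^ (-t) * (Algebra.trace ↥G ↥H) y := by
      rw [halg, ← map_zpow₀, mul_comm, ← Algebra.smul_def, LinearMap.map_smul, smul_eq_mul]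
    rw [htr] at hT1
    have hwGcoe : ((wG ^ (-t) : ↥G) : L) = πG ^ (-t) := by
      rw [← Subfield.coe_subtype, map_zpow₀]
      rfl
    rw [MulMemClass.coe_mul, hwGcoe, D.a_mul, D.a_zpow _ hπG0] at hT1
    have hTy : D.a (((Algebra.trace ↥G ↥H) y : ↥G) : L) ≤ D.a πG ^ t :=
      calc D.a (((Algebra.trace ↥G ↥H) y : ↥G) : L)
          = D.a πG ^ t * (D.a πG ^ (-t) * D.a (((Algebra.trace ↥G ↥H) y : ↥G) : L)) := by
            rw [← mul_assoc, ← zpow_add₀ (ne_of_gt hπGpos), add_neg_cancel, zpow_zero, one_mul]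
        _ ≤ D.a πG ^ t * 1 := mul_le_mul_of_nonneg_left hT1 (zpow_nonneg hπGpos.le t)
        _ = D.a πG ^ t := mul_one _
    calc D.a (((Algebra.trace ↥G ↥H) y : ↥G) : L) ≤ D.a πG ^ t := hTy
      _ = D.a πH ^ ((p : ℤ) * t) := by rw [← D.a_zpow _ hπG0, haπG t]
      _ ≤ D.a πH ^ (k + ((dd : ℤ) - ((p : ℤ) - 1))) :=
          zpow_le_zpow_right_of_le_one₀ hπHpos hπH1.le (by linarith)
      _ = D.a πH ^ ((dd : ℤ) - ((p : ℤ) - 1)) * D.a (y : L) := by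
          rw [zpow_add₀ hc0, ← hk, mul_comm]

lemma geom_aux (P : ℝ) (hP : 2 ≤ P) (N : ℕ) :
    ∑ j ∈ Finset.range N, (P ^ (j + 1))⁻¹ ≤ (P - 1)⁻¹ := by
  have hP0 : (0:ℝ) < P := by linarith
  have hP1 : (0:ℝ) < P - 1 := by linarith
  have key : ∀ M : ℕ, ∑ j ∈ Finset.range M, (P ^ (j + 1))⁻¹
      = (P - 1)⁻¹ * (1 - (P ^ M)⁻¹) := by
    intro M
    induction M with
    | zero => simp
    | succ m ih =>
        rw [Finset.sum_range_succ, ih]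
        have h1 : P ^ m ≠ 0 := by positivity
        have h2 : P ^ (m + 1) ≠ 0 := by positivity
        field_simp
        ring
  rw [key N]
  have h3 : 0 < (P ^ N)⁻¹ := by positivity
  have h4 : 0 ≤ (P - 1)⁻¹ := by positivity
  nlinarith

/-- Let `K = K_0 ⊂ K_1 ⊂ ⋯ ⊂ K_n` be a sufficiently ramified tower of
local fields of characteristic `(0,p)` (each step `K_{m}/K_{m-1}` cyclic, totally
ramified of degree `p`, with `v_{K_m}(𝒟_{K_m/K_{m-1}}) ≥ e_K (p^m - 1) + (p - 1)`).
Then for every `x ∈ K_n`, `v(tr_{K_n/K}(x)) ≥ n - 1/(p-1) + v(x)`; equivalently,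
`|tr_{K_n/K}(x)| ≤ |p| ^ (n - (p-1)⁻¹) * |x|`.

The tower is realized as a chain of subfields `F 0 ≤ F 1 ≤ ⋯ ≤ F n = ⊤` of the top
field `L = K_n`, with `ϖ i` a uniformizer of `F i`; the valuation of the step
different is encoded through the trace-dual characterization. -/
theorem trace_bound_of_sufficiently_ramified_tower
    (p n : ℕ) (hp : p.Prime) (hn : 1 ≤ n)
    (L : Type*) [Field L] [CharZero L] (D : LocalFieldData p L)
    (F : Fin (n + 1) → Subfield L)
    (hmono : ∀ i : Fin n, F i.castSucc ≤ F i.succ)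
    (htop : F (Fin.last n) = ⊤)
    (ϖ : Fin (n + 1) → L)
    (hϖmem : ∀ i, ϖ i ∈ F i)
    (hϖpos : ∀ i, 0 < D.a (ϖ i)) (hϖ1 : ∀ i, D.a (ϖ i) < 1)
    (hdisc : ∀ i, ∀ x ∈ F i, x ≠ 0 → ∃ k : ℤ, D.a x = D.a (ϖ i) ^ k)
    (e : ℕ) (he1 : 1 ≤ e) (he : D.a ((p : L)) = D.a (ϖ 0) ^ e)
    -- each step is Galois (hence cyclic, being of prime degree `p`) ...
    (hgal : ∀ i : Fin n, @IsGalois ↥(F i.castSucc) _ ↥(F i.succ) _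
      ((Subfield.inclusion (hmono i)).toAlgebra))
    -- ... of degree `p` ...
    (hdeg : ∀ i : Fin n, @Module.finrank ↥(F i.castSucc) ↥(F i.succ) _ _
      (@Algebra.toModule _ _ _ _ ((Subfield.inclusion (hmono i)).toAlgebra)) = p)
    -- ... and totally ramified
    (htot : ∀ i : Fin n, D.a (ϖ i.castSucc) = D.a (ϖ i.succ) ^ p)
    -- the step different satisfies `v_{K_{i+1}}(𝒟) ≥ e_K (p^(i+1) - 1) + (p - 1)`
    (hdiff : ∀ i : Fin n, ∃ dd : ℕ,
      ((e : ℝ) * ((p : ℝ) ^ ((i : ℕ) + 1) - 1) + ((p : ℝ) - 1) ≤ (dd : ℝ)) ∧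
      ∀ x : ↥(F i.succ),
        ((∀ y : ↥(F i.succ), D.a (y : L) ≤ 1 →
            D.a (((@Algebra.trace ↥(F i.castSucc) ↥(F i.succ) _ _
              ((Subfield.inclusion (hmono i)).toAlgebra)) (x * y) : ↥(F i.castSucc)) : L) ≤ 1) ↔
          D.a (x : L) ≤ D.a (ϖ i.succ) ^ (-(dd : ℤ)))) :
    ∀ x : L,
      D.a ((Algebra.trace ↥(F 0) L x : ↥(F 0)) : L) ≤
        D.a ((p : L)) ^ ((n : ℝ) - ((p : ℝ) - 1)⁻¹) * D.a x := by
  classical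
  choose dd hdd1 hdd2 using hdiff
  have hp2 : 2 ≤ p := hp.two_le
  have hpR : (2:ℝ) ≤ (p:ℝ) := by exact_mod_cast hp2
  have hq0 : 0 < D.a ((p : L)) := D.a_pos _ (Nat.cast_ne_zero.mpr hp.ne_zero)
  have hq1 : D.a ((p : L)) < 1 := D.res_char
  -- uniformizer chain
  have hroot : ∀ m : Fin (n + 1), D.a (ϖ 0) = D.a (ϖ m) ^ (p ^ (m : ℕ)) := by
    intro m
    induction m using Fin.induction with
    | zero => simp
    | succ i ih =>
        rw [ih, htot i, ← pow_mul, Fin.coe_castSucc, Fin.val_succ, pow_succ']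
  have hϖq : ∀ i : Fin n, D.a (ϖ i.succ) ^ (e * p ^ ((i : ℕ) + 1)) = D.a ((p : L)) := by
    intro i
    rw [he, hroot i.succ, ← pow_mul, Fin.val_succ, mul_comm e (p ^ ((i : ℕ) + 1))]
  -- per-step bound in terms of `q = D.a p`
  have hstepq : ∀ i : Fin n, D.a (ϖ i.succ) ^ ((dd i : ℤ) - ((p : ℤ) - 1)) ≤
      D.a ((p : L)) ^ (1 - ((p : ℝ) ^ ((i : ℕ) + 1))⁻¹) := by
    intro i
    have hc0 : 0 < D.a (ϖ i.succ) := hϖpos _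
    have hc1 : D.a (ϖ i.succ) < 1 := hϖ1 _
    have hppow : 1 ≤ p ^ ((i : ℕ) + 1) := Nat.one_le_pow _ _ hp.pos
    have hE : ((e * (p ^ ((i : ℕ) + 1) - 1) : ℕ) : ℤ) ≤ (dd i : ℤ) - ((p : ℤ) - 1) := by
      have h1 := hdd1 i
      have h2 : ((e * (p ^ ((i : ℕ) + 1) - 1) : ℕ) : ℝ) ≤ (dd i : ℝ) - ((p : ℝ) - 1) := by
        push_cast [Nat.cast_sub hppow]
        linarith
      exact_mod_cast h2
    have hNr : ((e * p ^ ((i : ℕ) + 1) : ℕ) : ℝ) * (1 - ((p : ℝ) ^ ((i : ℕ) + 1))⁻¹)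
        = ((e * (p ^ ((i : ℕ) + 1) - 1) : ℕ) : ℝ) := by
      have hpp : (0:ℝ) < (p : ℝ) ^ ((i : ℕ) + 1) := by positivity
      push_cast [Nat.cast_sub hppow]
      field_simp
    calc D.a (ϖ i.succ) ^ ((dd i : ℤ) - ((p : ℤ) - 1))
        ≤ D.a (ϖ i.succ) ^ ((e * (p ^ ((i : ℕ) + 1) - 1) : ℕ) : ℤ) :=
          zpow_le_zpow_right_of_le_one₀ hc0 hc1.le hE
      _ = D.a (ϖ i.succ) ^ (e * (p ^ ((i : ℕ) + 1) - 1) : ℕ) := zpow_natCast _ _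
      _ = D.a ((p : L)) ^ (1 - ((p : ℝ) ^ ((i : ℕ) + 1))⁻¹) := by
          rw [← hϖq i, ← Real.rpow_natCast (D.a (ϖ i.succ)) (e * p ^ ((i : ℕ) + 1)),
            ← Real.rpow_mul hc0.le, hNr, Real.rpow_natCast]
  -- downward induction along the tower
  have key : ∀ m : Fin (n + 1), FiniteDimensional ↥(F m) L ∧ ∀ x : L,
      D.a ((Algebra.trace ↥(F m) L x : ↥(F m)) : L) ≤
        (∏ j ∈ Finset.univ.filter (fun j : Fin n => (m : ℕ) ≤ (j : ℕ)),
          D.a (ϖ j.succ) ^ ((dd j : ℤ) - ((p : ℤ) - 1))) * D.a x := by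
    intro m
    induction m using Fin.reverseInduction with
    | last =>
        have hmem : ∀ z : L, z ∈ F (Fin.last n) := fun z => htop ▸ Subfield.mem_top z
        have hsurj : Function.Surjective (Algebra.linearMap ↥(F (Fin.last n)) L) :=
          fun z => ⟨⟨z, hmem z⟩, rfl⟩
        refine ⟨Module.Finite.of_surjective _ hsurj, fun x => ?_⟩
        have hfilt : Finset.univ.filter
            (fun j : Fin n => ((Fin.last n : Fin (n + 1)) : ℕ) ≤ (j : ℕ)) = ∅ := by
          apply Finset.filter_false_of_mem
          intro j _
          simp only [Fin.val_last]
          omega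
        rw [top_trace _ htop, hfilt, Finset.prod_empty, one_mul]
    | cast i ih =>
        obtain ⟨ihFD, ihB⟩ := ih
        letI : Algebra ↥(F i.castSucc) ↥(F i.succ) := (Subfield.inclusion (hmono i)).toAlgebra
        haveI : IsScalarTower ↥(F i.castSucc) ↥(F i.succ) L :=
          IsScalarTower.of_algebraMap_eq (fun r => rfl)
        haveI hFD1 : FiniteDimensional ↥(F i.castSucc) ↥(F i.succ) :=
          FiniteDimensional.of_finrank_pos (by rw [hdeg i]; exact hp.pos)
        haveI hFD0 : FiniteDimensional ↥(F i.castSucc) L :=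
          FiniteDimensional.trans ↥(F i.castSucc) ↥(F i.succ) L
        refine ⟨hFD0, fun x => ?_⟩
        have htt : Algebra.trace ↥(F i.castSucc) L x
            = (Algebra.trace ↥(F i.castSucc) ↥(F i.succ)) (Algebra.trace ↥(F i.succ) L x) :=
          (Algebra.trace_trace x).symm
        have hfilt : Finset.univ.filter
              (fun j : Fin n => ((i.castSucc : Fin (n + 1)) : ℕ) ≤ (j : ℕ))
            = insert i (Finset.univ.filter
              (fun j : Fin n => ((i.succ : Fin (n + 1)) : ℕ) ≤ (j : ℕ))) := by
          ext j
          simp only [Finset.mem_filter, Finset.mem_univ, true_and, Finset.mem_insert,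
            Fin.coe_castSucc, Fin.val_succ, Fin.ext_iff]
          omega
        have hnotmem : i ∉ Finset.univ.filter
            (fun j : Fin n => ((i.succ : Fin (n + 1)) : ℕ) ≤ (j : ℕ)) := by
          simp [Fin.val_succ]
        rw [htt, hfilt, Finset.prod_insert hnotmem, mul_assoc]
        calc D.a (((Algebra.trace ↥(F i.castSucc) ↥(F i.succ))
              (Algebra.trace ↥(F i.succ) L x) : ↥(F i.castSucc)) : L)
            ≤ D.a (ϖ i.succ) ^ ((dd i : ℤ) - ((p : ℤ) - 1)) *
                D.a ((Algebra.trace ↥(F i.succ) L x : ↥(F i.succ)) : L) :=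
              step_bound hp D (hmono i) (hϖmem i.castSucc) (hmono i (hϖmem i.castSucc))
                (hϖpos i.succ) (hϖ1 i.succ) (htot i) (hdisc i.succ) (dd i) (hdd2 i) _
          _ ≤ D.a (ϖ i.succ) ^ ((dd i : ℤ) - ((p : ℤ) - 1)) *
                ((∏ j ∈ Finset.univ.filter
                    (fun j : Fin n => ((i.succ : Fin (n + 1)) : ℕ) ≤ (j : ℕ)),
                  D.a (ϖ j.succ) ^ ((dd j : ℤ) - ((p : ℤ) - 1))) * D.a x) :=
              mul_le_mul_of_nonneg_left (ihB x) (zpow_nonneg (hϖpos i.succ).le _)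
  -- assemble
  intro x
  obtain ⟨_, hb⟩ := key 0
  have hfilt0 : Finset.univ.filter (fun j : Fin n => ((0 : Fin (n + 1)) : ℕ) ≤ (j : ℕ))
      = Finset.univ := by
    simp
  rw [hfilt0] at hb
  have hprod : (∏ j : Fin n, D.a (ϖ j.succ) ^ ((dd j : ℤ) - ((p : ℤ) - 1)))
      ≤ D.a ((p : L)) ^ ((n : ℝ) - ((p : ℝ) - 1)⁻¹) := by
    calc (∏ j : Fin n, D.a (ϖ j.succ) ^ ((dd j : ℤ) - ((p : ℤ) - 1)))
        ≤ ∏ j : Fin n, D.a ((p : L)) ^ (1 - ((p : ℝ) ^ ((j : ℕ) + 1))⁻¹) :=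
          Finset.prod_le_prod (fun j _ => zpow_nonneg (hϖpos j.succ).le _)
            (fun j _ => hstepq j)
      _ = D.a ((p : L)) ^ (∑ j : Fin n, (1 - ((p : ℝ) ^ ((j : ℕ) + 1))⁻¹)) :=
          (Real.rpow_sum_of_pos hq0 _ _).symm
      _ ≤ D.a ((p : L)) ^ ((n : ℝ) - ((p : ℝ) - 1)⁻¹) := by
          apply Real.rpow_le_rpow_of_exponent_ge hq0 hq1.le
          have hsum : ∑ j : Fin n, (1 - ((p : ℝ) ^ ((j : ℕ) + 1))⁻¹)
              = (n : ℝ) - ∑ j ∈ Finset.range n, ((p : ℝ) ^ (j + 1))⁻¹ := by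
            rw [Finset.sum_sub_distrib,
              Fin.sum_univ_eq_sum_range (fun j => (((p : ℝ) ^ (j + 1))⁻¹)) n]
            simp
          rw [hsum]
          have hg := geom_aux (p : ℝ) hpR n
          linarith
  calc D.a ((Algebra.trace ↥(F 0) L x : ↥(F 0)) : L)
      ≤ (∏ j : Fin n, D.a (ϖ j.succ) ^ ((dd j : ℤ) - ((p : ℤ) - 1))) * D.a x := hb x
    _ ≤ D.a ((p : L)) ^ ((n : ℝ) - ((p : ℝ) - 1)⁻¹) * D.a x :=
        mul_le_mul_of_nonneg_right hprod (D.a_nonneg x)
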